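/- arXiv:1903.00370 — 8 statements merged into one kernel-verified Lean document; each statement's English description precedes it below -/
import Mathlib

section
/- Every p-compact operator between two lattice-normed spaces is p-bounded; that is, if T : (E,p,V) → (F,q,W) is linear and for every p-bounded net (x_α) in E there is a subnet (x_{φ(β)}) such that (T x_{φ(β)}) q-converges to some y ∈ F, then T maps p-bounded subsets of E to q-bounded subsets of F. -/
/-!
If `T` is not `p`-bounded on `M`, then for every `w ∈ W` there is `x_w ∈ M` with
`q (T x_w) ≰ w`. Indexed by the directed set `W` itself, `(x_w)` is a `p`-bounded net, so some
subnet `(T x_{φ β})` `q`-converges to some `y`. A `q`-convergent net is eventually bounded by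
`e_γ + q y`, whereas by cofinality of `φ` the subnet exceeds every level of `W` frequently.
-/

open Filter MeasureTheory Set

/-- A nonempty, upward-directed index preorder (the index set of a net). -/
def IsDirectedIx (A : Type) [Preorder A] : Prop :=
  Nonempty A ∧ ∀ a b : A, ∃ c : A, a ≤ c ∧ b ≤ c

/-- `φ : B → A` is a (Kelley) subnet selection map: monotone and cofinal. -/
def IsSubnet {A B : Type} [Preorder A] [Preorder B] (φ : B → A) : Prop :=
  Monotone φ ∧ ∀ a : A, ∃ b : B, a ≤ φ b

/-- `p : E → V` is a vector ("lattice") norm with values in the vector lattice `V`. -/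
def IsVectorNorm {E V : Type} [AddCommGroup E] [Module ℝ E]
    [AddCommGroup V] [Lattice V] [Module ℝ V] (p : E → V) : Prop :=
  (∀ x, 0 ≤ p x) ∧ (∀ x, p x = 0 ↔ x = 0) ∧
  (∀ x y, p (x + y) ≤ p x + p y) ∧ (∀ (c : ℝ) (x : E), p (c • x) = |c| • p x)

/-- `q`-convergence of the net `y` to `z` in a lattice-normed space `(E, q, V)`:
there is a decreasing net `e` in `V` with infimum `0` dominating `q (y α - z)` eventually. -/
def QConvNet {A E V : Type} [Preorder A] [AddCommGroup E]
    [AddCommGroup V] [Lattice V] (q : E → V) (y : A → E) (z : E) : Prop :=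
  ∃ (Γ : Type) (_ : Preorder Γ), IsDirectedIx Γ ∧
    ∃ e : Γ → V, Antitone e ∧ IsGLB (Set.range e) 0 ∧
      ∀ γ : Γ, ∃ α₀ : A, ∀ α ≥ α₀, q (y α - z) ≤ e γ

/-- Relatively uniform `q`-convergence of the net `y` to `z`. -/
def RUConvNet {A E V : Type} [Preorder A] [AddCommGroup E]
    [AddCommGroup V] [Lattice V] [Module ℝ V] (q : E → V) (y : A → E) (z : E) : Prop :=
  ∃ e : V, 0 ≤ e ∧ ∀ ε : ℝ, 0 < ε → ∃ α₀ : A, ∀ α ≥ α₀, q (y α - z) ≤ ε • e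

/-- Order convergence of a net in a vector lattice. -/
def OConvNet {A G : Type} [Preorder A] [Lattice G] [AddCommGroup G]
    (f : A → G) (l : G) : Prop :=
  ∃ (Γ : Type) (_ : Preorder Γ), IsDirectedIx Γ ∧
    ∃ g : Γ → G, Antitone g ∧ IsGLB (Set.range g) 0 ∧
      ∀ γ : Γ, ∃ α₀ : A, ∀ α ≥ α₀, |f α - l| ≤ g γ

/-- Unbounded order convergence of a net in a vector lattice. -/
def UOConvNet {A G : Type} [Preorder A] [Lattice G] [AddCommGroup G]
    (f : A → G) (l : G) : Prop :=
  ∀ h : G, 0 ≤ h → OConvNet (fun α => |f α - l| ⊓ h) 0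

/-- Order convergence of a net computed inside the sublattice `S` of `G`:
the limit and the dominating decreasing net lie in `S`, and the dominating net
has infimum `0` relative to `S`. -/
def OConvNetIn {A G : Type} [Preorder A] [Lattice G] [AddCommGroup G]
    (S : Set G) (f : A → G) (l : G) : Prop :=
  l ∈ S ∧ ∃ (Γ : Type) (_ : Preorder Γ), IsDirectedIx Γ ∧
    ∃ g : Γ → G, (∀ γ, g γ ∈ S) ∧ Antitone g ∧ (∀ γ, 0 ≤ g γ) ∧
      (∀ w ∈ S, (∀ γ, w ≤ g γ) → w ≤ 0) ∧
      ∀ γ : Γ, ∃ α₀ : A, ∀ α ≥ α₀, |f α - l| ≤ g γ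

/-- Order convergence of a sequence inside the sublattice `S`. -/
def OConvSeqIn {G : Type} [Lattice G] [AddCommGroup G]
    (S : Set G) (f : ℕ → G) (l : G) : Prop :=
  OConvNetIn S f l

/-- The Riesz space of bounded real functions on `ℝ` with countable support. -/
def Fspace : Set (ℝ → ℝ) :=
  {f | (∃ C : ℝ, ∀ x, |f x| ≤ C) ∧ Set.Countable {x | f x ≠ 0}}

/-- `E = ℝ·1 ⊕ F`: functions that are a constant plus a bounded function with
countable support. -/
def Espace : Set (ℝ → ℝ) :=
  {g | ∃ (c : ℝ) (f : ℝ → ℝ), f ∈ Fspace ∧ g = fun x => c + f x}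

lemma isDirectedIx_of_isDirected (A : Type) [Preorder A] [Nonempty A] [IsDirected A (· ≤ ·)] :
    IsDirectedIx A :=
  ⟨‹_›, directed_of (· ≤ ·)⟩

lemma QConvNet.exists_eventually_le {A F W : Type} [Preorder A] [AddCommGroup F]
    [AddCommGroup W] [Lattice W] [AddLeftMono W] {q : F → W}
    (hq : ∀ x y, q (x + y) ≤ q x + q y) {y : A → F} {z : F} (h : QConvNet q y z) :
    ∃ w α₀, ∀ α ≥ α₀, q (y α) ≤ w := by
  obtain ⟨Γ, _, ⟨⟨γ⟩, -⟩, e, -, -, he⟩ := h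
  obtain ⟨α₀, hα₀⟩ := he γ
  refine ⟨e γ + q z, α₀, fun α hα => ?_⟩
  calc q (y α) = q (y α - z + z) := by rw [sub_add_cancel]
    _ ≤ q (y α - z) + q z := hq _ _
    _ ≤ e γ + q z := by gcongr; exact hα₀ α hα

lemma IsSubnet.exists_ge_not_le {A B : Type} [Preorder A] [Preorder B] (hB : IsDirectedIx B)
    {φ : B → A} (hφ : IsSubnet φ) {f : A → A} (hf : ∀ a, ¬ f a ≤ a) (a : A) (β₀ : B) :
    ∃ β ≥ β₀, ¬ f (φ β) ≤ a := by
  obtain ⟨b, hab⟩ := hφ.2 a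
  obtain ⟨β, hbβ, hβ₀β⟩ := hB.2 b β₀
  exact ⟨β, hβ₀β, fun h => hf (φ β) (h.trans (hab.trans (hφ.1 hbβ)))⟩

theorem pCompact_pBounded_general {E V F W : Type}
    [AddCommGroup E] [Module ℝ E]
    [AddCommGroup V] [Lattice V]
    [AddCommGroup W] [Lattice W] [Module ℝ W]
    [CovariantClass W W (· + ·) (· ≤ ·)]
    (p : E → V) (q : F → W) [AddCommGroup F] [Module ℝ F]
    (hq : IsVectorNorm q)
    (T : E →ₗ[ℝ] F)
    (hcompact : ∀ (A : Type) (_ : Preorder A), IsDirectedIx A →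
      ∀ x : A → E, (∃ e : V, ∀ α : A, p (x α) ≤ e) →
        ∃ (B : Type) (_ : Preorder B), IsDirectedIx B ∧
          ∃ φ : B → A, IsSubnet φ ∧
            ∃ y : F, QConvNet q (fun β => T (x (φ β))) y)
    (M : Set E) (hM : ∃ e : V, 0 ≤ e ∧ ∀ x ∈ M, p x ≤ e) :
    ∃ w : W, 0 ≤ w ∧ ∀ x ∈ M, q (T x) ≤ w := by
  by_contra! hunbdd
  have hescape : ∀ w : W, ∃ x ∈ M, ¬ q (T x) ≤ w := fun w =>
    (hunbdd (w ⊔ 0) le_sup_right).imp fun _ ⟨hxM, hx⟩ => ⟨hxM, fun h => hx (h.trans le_sup_left)⟩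
  choose x hxM hx using hescape
  obtain ⟨e, -, he⟩ := hM
  obtain ⟨B, _, hB, φ, hφ, y, hy⟩ :=
    hcompact W inferInstance (isDirectedIx_of_isDirected W) x ⟨e, fun w => he _ (hxM w)⟩
  obtain ⟨w, β₀, hw⟩ := hy.exists_eventually_le hq.2.2.1
  obtain ⟨β, hβ, hnot⟩ := hφ.exists_ge_not_le (f := fun w => q (T (x w))) hB hx w β₀
  exact hnot (hw β hβ)

/-- **Theorem (p-compact ⇒ p-bounded).** Every `p`-compact linear operator
`T : (E,p,V) → (F,q,W)` between lattice-normed spaces (with `V`, `W` Archimedean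
vector lattices) maps `p`-bounded sets to `q`-bounded sets. -/
theorem pCompact_pBounded {E V F W : Type}
    [AddCommGroup E] [Module ℝ E]
    [AddCommGroup V] [Lattice V] [Module ℝ V]
    [CovariantClass V V (· + ·) (· ≤ ·)]
    [AddCommGroup W] [Lattice W] [Module ℝ W]
    [CovariantClass W W (· + ·) (· ≤ ·)]
    (hArchV : ∀ u v : V, (∀ n : ℕ, (n : ℝ) • u ≤ v) → u ≤ 0)
    (hArchW : ∀ u v : W, (∀ n : ℕ, (n : ℝ) • u ≤ v) → u ≤ 0)
    (p : E → V) (q : F → W) [AddCommGroup F] [Module ℝ F]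
    (hp : IsVectorNorm p) (hq : IsVectorNorm q)
    (T : E →ₗ[ℝ] F)
    (hcompact : ∀ (A : Type) (_ : Preorder A), IsDirectedIx A →
      ∀ x : A → E, (∃ e : V, ∀ α : A, p (x α) ≤ e) →
        ∃ (B : Type) (_ : Preorder B), IsDirectedIx B ∧
          ∃ φ : B → A, IsSubnet φ ∧
            ∃ y : F, QConvNet q (fun β => T (x (φ β))) y)
    (M : Set E) (hM : ∃ e : V, 0 ≤ e ∧ ∀ x ∈ M, p x ≤ e) :
    ∃ w : W, 0 ≤ w ∧ ∀ x ∈ M, q (T x) ≤ w :=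
  pCompact_pBounded_general p q hq T hcompact M hM
end

section
/- Let F be the Riesz space of all bounded real-valued functions on ℝ with countable support, and let E = ℝ·1 ⊕ F, where 1 is the constant function 1. Then E is a regular vector sublattice of ℝ^ℝ: if a net (g_α) in E satisfies g_α ↓ 0 in E, then g_α ↓ 0 in ℝ^ℝ. -/
open Filter MeasureTheory Set

/- A lower bound `h` of the net in `ℝ^ℝ` is tested pointwise against the one-point
functions `Pi.single x (h x ⊔ 0)`: these lie in `E` and below every `g α`, so the infimum `0`
of the net in `E` dominates them, forcing `h x ≤ 0`. -/

theorem isGLB_zero_of_single_mem {ι β : Type*} [DecidableEq ι] [Lattice β] [Zero β]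
    {S s : Set (ι → β)} (hS : ∀ i c, 0 ≤ c → Pi.single i c ∈ S) (hpos : ∀ f ∈ s, 0 ≤ f)
    (hinf : ∀ h ∈ S, (∀ f ∈ s, h ≤ f) → h ≤ 0) : IsGLB s 0 := by
  refine ⟨hpos, fun h hlb x => ?_⟩
  have hsingle_le : ∀ f ∈ s, Pi.single x (h x ⊔ 0) ≤ f := by
    intro f hf y
    rcases eq_or_ne y x with rfl | hyx
    · simpa using sup_le (hlb hf y) (hpos f hf y)
    · simpa [Pi.single_apply, hyx] using hpos f hf y
  have := hinf _ (hS x _ le_sup_right) hsingle_le x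
  simp only [Pi.single_eq_same] at this
  exact le_sup_left.trans this

theorem Pi.single_mem_Fspace [DecidableEq ℝ] (x c : ℝ) : (Pi.single x c : ℝ → ℝ) ∈ Fspace := by
  refine ⟨⟨|c|, fun y => ?_⟩, (countable_singleton x).mono Pi.support_single_subset⟩
  rcases eq_or_ne y x with rfl | hyx
  · simp
  · simp [hyx]

theorem Fspace_subset_Espace : Fspace ⊆ Espace :=
  fun f hf => ⟨0, f, hf, by simp⟩

theorem Espace_regular_general {A : Type}
    (g : A → (ℝ → ℝ)) (hpos : ∀ α, 0 ≤ g α)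
    (hinfE : ∀ h ∈ Espace, (∀ α, h ≤ g α) → h ≤ 0) :
    IsGLB (Set.range g) 0 := by
  classical
  exact isGLB_zero_of_single_mem
    (fun x c _ => Fspace_subset_Espace (Pi.single_mem_Fspace x c))
    (forall_mem_range.2 hpos) (fun h hh hlb => hinfE h hh (forall_mem_range.1 hlb))

/-- **Lemma (regularity).** `E = ℝ·1 ⊕ F` is a regular sublattice of `ℝ^ℝ`:
if a net in `E` decreases to `0` in `E`, then its infimum in `ℝ^ℝ` is `0`. -/
theorem Espace_regular {A : Type} [Preorder A] (hA : IsDirectedIx A)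
    (g : A → (ℝ → ℝ)) (hmem : ∀ α, g α ∈ Espace)
    (hanti : Antitone g) (hpos : ∀ α, 0 ≤ g α)
    (hinfE : ∀ h ∈ Espace, (∀ α, h ≤ g α) → h ≤ 0) :
    IsGLB (Set.range g) 0 :=
  Espace_regular_general g hpos hinfE
end

section
/- Let F be the Riesz space of bounded real-valued functions on ℝ with countable support and E = ℝ·1 ⊕ F ⊆ ℝ^ℝ. Then E is Dedekind σ-complete: every order bounded sequence in E has a supremum in E. -/
open Filter MeasureTheory Set

/-!
The supremum of an order bounded sequence `gₙ = cₙ + fₙ` in `E` is the pointwise supremum `s`.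
It is squeezed between `g₀` and the upper bound, hence bounded, and outside the countable union
of the supports of the `fₙ` it equals the constant `⨆ cₙ`; so `s ∈ E`.
-/

theorem mem_Espace_iff {g : ℝ → ℝ} :
    g ∈ Espace ↔ (∃ C, ∀ x, |g x| ≤ C) ∧ ∃ c, {x | g x ≠ c}.Countable := by
  constructor
  · rintro ⟨c, f, ⟨⟨C, hC⟩, hf⟩, rfl⟩
    refine ⟨⟨|c| + C, fun x => (abs_add_le c (f x)).trans (by linarith [hC x])⟩, c, ?_⟩
    simpa only [ne_eq, add_eq_left] using hf
  · rintro ⟨⟨C, hC⟩, c, hc⟩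
    refine ⟨c, fun x => g x - c, ⟨⟨C + |c|, fun x => ?_⟩, ?_⟩, by simp⟩
    · exact (abs_sub (g x) c).trans (by linarith [hC x])
    · simpa only [ne_eq, sub_eq_zero] using hc

theorem exists_abs_le_of_le_of_le {α : Type*} {l s u : α → ℝ} (hl : l ≤ s) (hu : s ≤ u)
    (hlC : ∃ C, ∀ x, |l x| ≤ C) (huC : ∃ C, ∀ x, |u x| ≤ C) : ∃ C, ∀ x, |s x| ≤ C := by
  obtain ⟨C₁, hC₁⟩ := hlC
  obtain ⟨C₂, hC₂⟩ := huC
  refine ⟨max C₁ C₂, fun x => abs_le.2 ⟨?_, ?_⟩⟩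
  · linarith [(abs_le.1 (hC₁ x)).1, hl x, le_max_left C₁ C₂]
  · linarith [(abs_le.1 (hC₂ x)).2, hu x, le_max_right C₁ C₂]

/-- Off the exceptional sets the families `(g · x)` and `c` coincide, so their suprema agree
even where `⨆` takes a junk value. -/
theorem countable_setOf_iSup_ne {ι α β : Type*} [Countable ι] [SupSet β] {g : ι → α → β}
    {c : ι → β} (h : ∀ i, {x | g i x ≠ c i}.Countable) :
    {x | ⨆ i, g i x ≠ ⨆ i, c i}.Countable := by
  refine (countable_iUnion h).mono fun x hx => mem_iUnion.2 ?_
  by_contra! hxc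
  exact hx (iSup_congr fun i => not_not.1 (hxc i))

/-- **Lemma.** `E = ℝ·1 ⊕ F` is Dedekind `σ`-complete: every order bounded
sequence in `E` has a supremum in `E`. -/
theorem Espace_sigma_DedekindComplete
    (g : ℕ → (ℝ → ℝ)) (hmem : ∀ n, g n ∈ Espace)
    (hbdd : ∃ b ∈ Espace, ∀ n, g n ≤ b) :
    ∃ s ∈ Espace, (∀ n, g n ≤ s) ∧ ∀ b ∈ Espace, (∀ n, g n ≤ b) → s ≤ b := by
  obtain ⟨b, hbE, hb⟩ := hbdd
  have hg : BddAbove (range g) := ⟨b, forall_mem_range.2 hb⟩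
  refine ⟨⨆ n, g n, ?_, le_ciSup hg, fun b' _ hb' => ciSup_le hb'⟩
  simp only [mem_Espace_iff] at hmem hbE ⊢
  choose c hc using fun n => (hmem n).2
  refine ⟨exists_abs_le_of_le_of_le (le_ciSup hg 0) (ciSup_le hb) (hmem 0).1 hbE.1, ⨆ n, c n, ?_⟩
  simpa only [iSup_apply] using countable_setOf_iSup_ne hc
end

section
/- Let X be an uncountable set (e.g., the set of strictly increasing maps ℕ → ℕ) and E = ℝ^X. If (φ_n) is a sequence in {−1,1}^X ⊆ E having no pointwise convergent subsequence, then the identity on (E,|·|,E) is not sequentially p-compact: the sequence (φ_n) is order bounded in E but no subsequence of it order converges in E. -/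
open Filter MeasureTheory Set

/- Infima in `ℝ^X` are coordinatewise, so the dominating net gets below any `ε > 0` at each point. -/
theorem OConvNet.tendsto_apply {A X : Type} [Preorder A] {f : A → X → ℝ} {l : X → ℝ}
    (h : OConvNet f l) (x : X) : Tendsto (fun a => f a x) atTop (nhds (l x)) := by
  obtain ⟨Γ, _, -, g, -, hglb, hdom⟩ := h
  have hglb_x : IsGLB (range fun γ => g γ x) 0 := by
    have h := isGLB_pi.1 hglb x
    rwa [← range_comp] at h
  refine Metric.tendsto_nhds.2 fun ε hε => ?_
  obtain ⟨-, ⟨γ, rfl⟩, -, hγ⟩ := hglb_x.exists_between hε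
  obtain ⟨a₀, ha₀⟩ := hdom γ
  filter_upwards [mem_atTop a₀] with a ha
  exact (ha₀ a ha x).trans_lt hγ

theorem identity_not_sequentially_pCompact_general {X : Type}
    (φ : ℕ → X → ℝ) (hval : ∀ n x, φ n x = 1 ∨ φ n x = -1)
    (hnoconv : ∀ ψ : ℕ → ℕ, StrictMono ψ →
      ¬ ∃ l : X → ℝ, ∀ x, Filter.Tendsto (fun k => φ (ψ k) x)
        Filter.atTop (nhds (l x))) :
    (∃ b : X → ℝ, ∀ n, |φ n| ≤ b) ∧
    ∀ ψ : ℕ → ℕ, StrictMono ψ →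
      ¬ ∃ l : X → ℝ, OConvNet (fun k => φ (ψ k)) l := by
  refine ⟨⟨1, fun n x => ?_⟩, fun ψ hψ ⟨l, hl⟩ => hnoconv ψ hψ ⟨l, hl.tendsto_apply⟩⟩
  rcases hval n x with h | h <;> simp [h]

/-- **Example.** Let `X` be an uncountable set and `E = ℝ^X`. If `(φ_n)` is a
sequence of `±1`-valued functions with no pointwise convergent subsequence, then
`(φ_n)` is order bounded in `E` but no subsequence of it order converges in `E`;
hence the identity on `(E,|·|,E)` is not sequentially `p`-compact. -/
theorem identity_not_sequentially_pCompact {X : Type} [Nonempty X]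
    (hX : ¬ (Set.univ : Set X).Countable)
    (φ : ℕ → X → ℝ) (hval : ∀ n x, φ n x = 1 ∨ φ n x = -1)
    (hnoconv : ∀ ψ : ℕ → ℕ, StrictMono ψ →
      ¬ ∃ l : X → ℝ, ∀ x, Filter.Tendsto (fun k => φ (ψ k) x)
        Filter.atTop (nhds (l x))) :
    (∃ b : X → ℝ, ∀ n, |φ n| ≤ b) ∧
    ∀ ψ : ℕ → ℕ, StrictMono ψ →
      ¬ ∃ l : X → ℝ, OConvNet (fun k => φ (ψ k)) l :=
  identity_not_sequentially_pCompact_general φ hval hnoconv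
end

section
/- Every order bounded net of elements of {−1,1}^X ⊆ ℝ^X that order converges in ℝ^X converges pointwise; consequently, for X the set of strictly increasing maps ℕ → ℕ, there exists an order bounded sequence in ℝ^X with no order convergent subsequence. -/
open Filter MeasureTheory Set

/-!
Infima in `ℝ^X` are computed pointwise, so an order convergent net in `ℝ^X` is order
convergent at every coordinate, and order convergence in `ℝ` is convergence. For the
counterexample take `φ n g = (-1) ^ g n`: along any subsequence `ψ`, some strictly increasing
`g` gives `g (ψ k)` the parity of `k`, so the coordinate of `φ ∘ ψ` at `g` alternates and
cannot converge.
-/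

open Topology

theorem OConvNet.apply {A X G : Type} [Preorder A] [Lattice G] [AddCommGroup G]
    {f : A → X → G} {l : X → G} (h : OConvNet f l) (x : X) :
    OConvNet (fun α => f α x) (l x) := by
  obtain ⟨Γ, _, hΓ, g, hg_anti, hg_glb, hdom⟩ := h
  refine ⟨Γ, inferInstance, hΓ, fun γ => g γ x, fun _ _ hγ => hg_anti hγ x, ?_, ?_⟩
  · have := isGLB_pi.mp hg_glb x
    rwa [← Set.range_comp] at this
  · intro γ
    obtain ⟨α₀, hα₀⟩ := hdom γ
    exact ⟨α₀, fun α hα => hα₀ α hα x⟩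

theorem OConvNet.tendsto {A G : Type} [Preorder A] [AddCommGroup G] [LinearOrder G]
    [IsOrderedAddMonoid G] [TopologicalSpace G] [OrderTopology G]
    {f : A → G} {l : G} (h : OConvNet f l) : Tendsto f atTop (𝓝 l) := by
  obtain ⟨Γ, _, -, g, -, hg_glb, hdom⟩ := h
  have eventually_abs_sub_lt : ∀ ε > 0, ∀ᶠ α in atTop, |f α - l| < ε := by
    intro ε hε
    obtain ⟨-, ⟨γ, rfl⟩, -, hγ⟩ := hg_glb.exists_between hε
    obtain ⟨α₀, hα₀⟩ := hdom γ
    filter_upwards [mem_atTop α₀] with α hα using (hα₀ α hα).trans_lt hγ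
  refine tendsto_order.mpr ⟨fun a ha => ?_, fun b hb => ?_⟩
  · filter_upwards [eventually_abs_sub_lt (l - a) (sub_pos.mpr ha)] with α hα
    exact (sub_lt_sub_iff_left l).mp (abs_sub_lt_iff.mp hα).2
  · filter_upwards [eventually_abs_sub_lt (b - l) (sub_pos.mpr hb)] with α hα
    exact (sub_lt_sub_iff_right l).mp (abs_sub_lt_iff.mp hα).1

theorem not_tendsto_neg_one_pow {R : Type} [Ring R] [TopologicalSpace R] [T2Space R]
    (h : (-1 : R) ≠ 1) (l : R) : ¬ Tendsto (fun k : ℕ => (-1 : R) ^ k) atTop (𝓝 l) := by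
  intro hl
  have h_even : Tendsto (fun _ : ℕ => (1 : R)) atTop (𝓝 l) :=
    (hl.comp (tendsto_atTop_mono (fun k => show k ≤ 2 * k by omega) tendsto_id)).congr
      fun k => by simp [pow_mul]
  have h_odd : Tendsto (fun _ : ℕ => (-1 : R)) atTop (𝓝 l) :=
    (hl.comp (tendsto_atTop_mono (fun k => show k ≤ 2 * k + 1 by omega) tendsto_id)).congr
      fun k => by simp [pow_succ, pow_mul]
  exact h ((tendsto_nhds_unique h_odd tendsto_const_nhds).symm.trans
    (tendsto_nhds_unique h_even tendsto_const_nhds))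

theorem strictMono_two_mul_add {c : ℕ → ℕ} (hc : ∀ n, c n ≤ 1) :
    StrictMono fun n => 2 * n + c n :=
  strictMono_nat_of_lt_succ fun n => by have := hc n; omega

theorem exists_strictMono_parity_comp {ψ : ℕ → ℕ} (hψ : ψ.Injective) :
    ∃ g : ℕ → ℕ, StrictMono g ∧ ∀ k, g (ψ k) % 2 = k % 2 := by
  set c := Function.extend ψ (· % 2) 0
  have hc : ∀ n, c n ≤ 1 := by
    intro n
    by_cases hn : ∃ k, ψ k = n
    · obtain ⟨k, rfl⟩ := hn
      simp only [c, hψ.extend_apply]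
      omega
    · simp [c, Function.extend_apply' _ _ _ hn]
  refine ⟨_, strictMono_two_mul_add hc, fun k => ?_⟩
  simp only [c, hψ.extend_apply]
  omega

/-- **Example.** (a) Every net of `±1`-valued functions in `ℝ^X` that order
converges in `ℝ^X` converges pointwise to its order limit. (b) Consequently,
for `X` the set of strictly increasing maps `ℕ → ℕ`, there is an order bounded
sequence in `ℝ^X` with no order convergent subsequence. -/
theorem pm_one_oConv_pointwise_and_counterexample :
    (∀ (X A : Type) (_ : Preorder A), IsDirectedIx A →
      ∀ (f : A → X → ℝ) (l : X → ℝ),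
        (∀ α x, f α x = 1 ∨ f α x = -1) → OConvNet f l →
          ∀ x, Filter.Tendsto (fun α => f α x) Filter.atTop (nhds (l x))) ∧
    ∃ φ : ℕ → ({g : ℕ → ℕ // StrictMono g} → ℝ),
      (∃ b, ∀ n, |φ n| ≤ b) ∧
      ∀ ψ : ℕ → ℕ, StrictMono ψ →
        ¬ ∃ l, OConvNet (fun k => φ (ψ k)) l := by
  refine ⟨fun X A _ _ f l _ hf x => (hf.apply x).tendsto,
    fun n g => (-1) ^ g.1 n, ⟨1, fun n g => by simp⟩, ?_⟩
  rintro ψ hψ ⟨l, hl⟩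
  obtain ⟨g, hg, hg_parity⟩ := exists_strictMono_parity_comp hψ.injective
  refine not_tendsto_neg_one_pow (by norm_num) (l ⟨g, hg⟩) ((hl.apply ⟨g, hg⟩).tendsto.congr
    fun k => ?_)
  dsimp only
  rw [neg_one_pow_eq_pow_mod_two, hg_parity, ← neg_one_pow_eq_pow_mod_two]
end

section
/- The Rademacher sequence r_n(t) = sgn(sin(2^n π t)) in L∞[0,1] has no order convergent subnet; hence the identity operator on the lattice-normed space (L∞[0,1], |·|, L∞[0,1]) is neither p-compact nor sequentially p-compact. -/
open Filter MeasureTheory Set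

/-! Order convergence in `L∞[0,1]` is domination by a decreasing net with infimum `0`, and the
integral is order continuous there: the pointwise infimum along a sequence whose integrals
approach the infimum of the integrals is an a.e. lower bound of the whole net, hence `0`. So two
late terms `r_m, r_n` (`1 ≤ m < n`) of a convergent subnet would have `∫ |r_n - r_m| < 1`, while
orthonormality gives `∫ |r_n - r_m| ≥ ∫ (r_n - r_m) r_n = 1`. -/
open Real Topology

lemma IsSubnet.exists_ge_le_apply {A B : Type} [Preorder A] [Preorder B] [IsDirectedOrder B]
    {φ : B → A} (hφ : IsSubnet φ) (β₀ : B) (a : A) : ∃ β, β₀ ≤ β ∧ a ≤ φ β := by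
  obtain ⟨β₁, hβ₁⟩ := hφ.2 a
  obtain ⟨β, hβ₀, hβ₁β⟩ := exists_ge_ge β₀ β₁
  exact ⟨β, hβ₀, hβ₁.trans (hφ.1 hβ₁β)⟩

section OrderContinuity

lemma exists_monotone_seq_ge {Γ : Type*} [Preorder Γ] [IsDirectedOrder Γ] (γ : ℕ → Γ) :
    ∃ δ : ℕ → Γ, Monotone δ ∧ ∀ k, γ k ≤ δ k := by
  choose ub hub₁ hub₂ using exists_ge_ge (α := Γ)
  let δ : ℕ → Γ := fun k => Nat.rec (γ 0) (fun k d => ub d (γ (k + 1))) k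
  refine ⟨δ, monotone_nat_of_le_succ fun k => hub₁ _ _, fun k => ?_⟩
  cases k with
  | zero => exact le_rfl
  | succ k => exact hub₂ _ _

lemma exists_monotone_tendsto_ciInf {Γ : Type*} [Preorder Γ] [Nonempty Γ] [IsDirectedOrder Γ]
    {I : Γ → ℝ} (hI : Antitone I) (hbdd : BddBelow (range I)) :
    ∃ δ : ℕ → Γ, Monotone δ ∧ Tendsto (I ∘ δ) atTop (𝓝 (⨅ γ, I γ)) := by
  have hlt (k : ℕ) : ∃ γ, I γ < (⨅ γ, I γ) + 1 / (k + 1) :=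
    exists_lt_of_ciInf_lt (lt_add_of_pos_right _ Nat.one_div_pos_of_nat)
  choose γ hγ using hlt
  obtain ⟨δ, hδ, hγδ⟩ := exists_monotone_seq_ge γ
  refine ⟨δ, hδ, tendsto_of_tendsto_of_tendsto_of_le_of_le tendsto_const_nhds
    (by simpa using tendsto_one_div_add_atTop_nhds_zero_nat.const_add (⨅ γ, I γ))
    (fun k => ciInf_le hbdd _) (fun k => (hI (hγδ k)).trans (hγ k).le)⟩

variable {α : Type*} [MeasurableSpace α] {μ : Measure α}

lemma integrable_iInf_and_tendsto_integral {f : ℕ → α → ℝ} (hf : ∀ n, Integrable (f n) μ)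
    (h_nonneg : ∀ᵐ x ∂μ, ∀ n, 0 ≤ f n x) (h_anti : ∀ᵐ x ∂μ, Antitone fun n => f n x) :
    Integrable (fun x => ⨅ n, f n x) μ ∧
      Tendsto (fun n => ∫ x, f n x ∂μ) atTop (𝓝 (∫ x, ⨅ n, f n x ∂μ)) := by
  have h_lim : ∀ᵐ x ∂μ, Tendsto (fun n => f n x) atTop (𝓝 (⨅ n, f n x)) := by
    filter_upwards [h_nonneg, h_anti] with x h0 ha
    exact tendsto_atTop_ciInf ha ⟨0, forall_mem_range.2 h0⟩
  have h_int : Integrable (fun x => ⨅ n, f n x) μ := by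
    refine (hf 0).mono' (aestronglyMeasurable_of_tendsto_ae atTop (fun n => (hf n).1) h_lim) ?_
    filter_upwards [h_nonneg] with x h0
    rw [Real.norm_eq_abs, abs_of_nonneg (le_ciInf h0)]
    exact ciInf_le ⟨0, forall_mem_range.2 h0⟩ 0
  exact ⟨h_int, integral_tendsto_of_tendsto_of_antitone hf h_int h_anti h_lim⟩

lemma exists_ae_le_integral_eq_iInf {Γ : Type*} [Preorder Γ] [Nonempty Γ] [IsDirectedOrder Γ]
    {f : Γ → α → ℝ} (hf : ∀ γ, Integrable (f γ) μ) (h_nonneg : ∀ γ, 0 ≤ᵐ[μ] f γ)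
    (h_anti : ∀ ⦃γ δ⦄, γ ≤ δ → f δ ≤ᵐ[μ] f γ) :
    ∃ h : α → ℝ, Integrable h μ ∧ 0 ≤ᵐ[μ] h ∧ (∀ γ, h ≤ᵐ[μ] f γ) ∧
      ∫ x, h x ∂μ = ⨅ γ, ∫ x, f γ x ∂μ := by
  set I : Γ → ℝ := fun γ => ∫ x, f γ x ∂μ
  have hbdd : BddBelow (range I) :=
    ⟨0, forall_mem_range.2 fun γ => integral_nonneg_of_ae (h_nonneg γ)⟩
  obtain ⟨δ, hδ, hIδ⟩ := exists_monotone_tendsto_ciInf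
    (fun γ γ' h => integral_mono_ae (hf γ') (hf γ) (h_anti h)) hbdd
  have hδ_nonneg : ∀ᵐ x ∂μ, ∀ n, 0 ≤ f (δ n) x := ae_all_iff.2 fun n => h_nonneg (δ n)
  have hδ_anti : ∀ᵐ x ∂μ, Antitone fun n => f (δ n) x := by
    filter_upwards [ae_all_iff.2 fun n : ℕ => h_anti (hδ n.le_succ)] with x hx
    exact antitone_nat_of_succ_le hx
  obtain ⟨h_int, h_tendsto⟩ :=
    integrable_iInf_and_tendsto_integral (fun n => hf (δ n)) hδ_nonneg hδ_anti
  have h_eq : ∫ x, ⨅ n, f (δ n) x ∂μ = ⨅ γ, I γ := tendsto_nhds_unique h_tendsto hIδ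
  refine ⟨fun x => ⨅ n, f (δ n) x, h_int, ?_, fun γ => ?_, h_eq⟩
  · filter_upwards [hδ_nonneg] with x hx using le_ciInf hx
  obtain ⟨h_int', h_tendsto'⟩ := integrable_iInf_and_tendsto_integral
    (f := fun n x => f (δ n) x ⊓ f γ x) (fun n => (hf (δ n)).inf (hf γ))
    (by filter_upwards [hδ_nonneg, h_nonneg γ] with x h1 h2 n using le_inf (h1 n) h2)
    (by filter_upwards [hδ_anti] with x hx using fun m n hmn => inf_le_inf_right _ (hx hmn))
  have h_ge : ⨅ γ, I γ ≤ ∫ x, ⨅ n, f (δ n) x ⊓ f γ x ∂μ := ge_of_tendsto' h_tendsto' fun n => by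
    obtain ⟨ε, hδε, hγε⟩ := exists_ge_ge (δ n) γ
    refine (ciInf_le hbdd ε).trans (integral_mono_ae (hf ε) ((hf (δ n)).inf (hf γ)) ?_)
    filter_upwards [h_anti hδε, h_anti hγε] with x h1 h2 using le_inf h1 h2
  have h_bdd : ∀ᵐ x ∂μ, BddBelow (range fun n => f (δ n) x ⊓ f γ x) := by
    filter_upwards [hδ_nonneg, h_nonneg γ] with x h1 h2
    exact ⟨0, forall_mem_range.2 fun n => le_inf (h1 n) h2⟩
  have h_le : (fun x => ⨅ n, f (δ n) x ⊓ f γ x) ≤ᵐ[μ] fun x => ⨅ n, f (δ n) x := by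
    filter_upwards [h_bdd] with x hx
    exact ciInf_mono hx fun n => inf_le_left
  have h_ae_eq := (integral_eq_iff_of_ae_le h_int' h_int h_le).1
    (le_antisymm (integral_mono_ae h_int' h_int h_le) (h_eq ▸ h_ge))
  filter_upwards [h_ae_eq, h_bdd] with x hx hx_bdd
  rw [← hx]
  exact ciInf_le_of_le hx_bdd 0 inf_le_right

end OrderContinuity

namespace MeasureTheory.Lp

variable {α : Type*} [MeasurableSpace α] {μ : Measure α} [IsFiniteMeasure μ]

lemma iInf_integral_eq_zero_of_isGLB {Γ : Type*} [Preorder Γ] [Nonempty Γ] [IsDirectedOrder Γ]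
    {g : Γ → Lp ℝ ⊤ μ} (hg : Antitone g) (hg_glb : IsGLB (range g) 0) :
    ⨅ γ, ∫ x, g γ x ∂μ = 0 := by
  have hg_nonneg (γ : Γ) : 0 ≤ᵐ[μ] g γ := (coeFn_nonneg _).2 (hg_glb.1 (mem_range_self γ))
  obtain ⟨h, h_int, h_nonneg, h_le, h_eq⟩ := exists_ae_le_integral_eq_iInf
    (fun γ => (Lp.memLp (g γ)).integrable le_top) hg_nonneg
    fun γ δ hγδ => (coeFn_le _ _).2 (hg hγδ)
  obtain ⟨γ₀⟩ := ‹Nonempty Γ›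
  have h_mem : MemLp h ⊤ μ := by
    refine (Lp.memLp (g γ₀)).of_le h_int.1 ?_
    filter_upwards [h_nonneg, h_le γ₀] with x h0 hx
    rwa [Real.norm_eq_abs, Real.norm_eq_abs, abs_of_nonneg h0, abs_of_nonneg (h0.trans hx)]
  have h_lb : h_mem.toLp h ∈ lowerBounds (range g) :=
    forall_mem_range.2 fun γ => (coeFn_le _ _).1 (h_mem.coeFn_toLp.trans_le (h_le γ))
  have h_nonpos : h ≤ᵐ[μ] 0 :=
    h_mem.coeFn_toLp.symm.trans_le (((coeFn_le _ _).2 (hg_glb.2 h_lb)).trans_eq (coeFn_zero ..))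
  rw [← h_eq]
  exact integral_eq_zero_of_ae (h_nonpos.antisymm h_nonneg)

lemma integral_abs_sub_le_two_mul {f₁ f₂ l e : Lp ℝ ⊤ μ} (h₁ : |f₁ - l| ≤ e) (h₂ : |f₂ - l| ≤ e) :
    ∫ x, |f₁ x - f₂ x| ∂μ ≤ 2 * ∫ x, e x ∂μ := by
  have h_bound (f : Lp ℝ ⊤ μ) (hf : |f - l| ≤ e) : ∀ᵐ x ∂μ, |f x - l x| ≤ e x := by
    filter_upwards [(coeFn_le _ _).2 hf, coeFn_abs (f - l), coeFn_sub f l] with x hx habs hsub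
    rwa [habs, hsub, Pi.sub_apply] at hx
  have h_int (f : Lp ℝ ⊤ μ) : Integrable f μ := (Lp.memLp f).integrable le_top
  rw [← integral_const_mul]
  refine integral_mono_ae ((h_int f₁).sub (h_int f₂)).abs ((h_int e).const_mul 2) ?_
  filter_upwards [h_bound f₁ h₁, h_bound f₂ h₂] with x hx₁ hx₂
  linarith [abs_sub_le (f₁ x) (l x) (f₂ x), abs_sub_comm (l x) (f₂ x)]

end MeasureTheory.Lp

lemma Function.Antiperiodic.intervalIntegral_add_zsmul_eq_zero {E : Type*} [NormedAddCommGroup E]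
    [NormedSpace ℝ E] {f : ℝ → E} {c : ℝ} (hf : Function.Antiperiodic f c)
    (hf_int : ∀ a b, IntervalIntegrable f volume a b) (t : ℝ) (n : ℤ) :
    ∫ x in t..t + n • (2 * c), f x = 0 := by
  have h_shift : ∫ x in t + c..t + c + c, f x = -∫ x in t..t + c, f x := by
    rw [← intervalIntegral.integral_neg, ← intervalIntegral.integral_comp_add_right]
    simp only [hf _]
  rw [hf.periodic_two_mul.intervalIntegral_add_zsmul_eq n t hf_int, two_mul, ← add_assoc,
    ← intervalIntegral.integral_add_adjacent_intervals (hf_int _ _) (hf_int _ _), h_shift,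
    add_neg_cancel, smul_zero]

lemma Real.measurable_sign : Measurable Real.sign :=
  Measurable.ite measurableSet_Iio measurable_const <|
    Measurable.ite measurableSet_Ioi measurable_const measurable_const

lemma Real.abs_sign_le_one (x : ℝ) : |Real.sign x| ≤ 1 := by
  rcases Real.sign_apply_eq x with h | h | h <;> simp [h]

noncomputable def rademacher (n : ℕ) (t : ℝ) : ℝ := Real.sign (Real.sin (2 ^ n * π * t))

@[fun_prop]
lemma measurable_rademacher (n : ℕ) : Measurable (rademacher n) :=
  Real.measurable_sign.comp (by fun_prop)

lemma abs_rademacher_le_one (n : ℕ) (t : ℝ) : |rademacher n t| ≤ 1 := Real.abs_sign_le_one _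

lemma rademacher_add (m k : ℕ) (t : ℝ) : rademacher (m + k) t = rademacher k (2 ^ m * t) := by
  simp only [rademacher, pow_add]
  ring_nf

lemma rademacher_zero_antiperiodic : Function.Antiperiodic (rademacher 0) 1 := fun t => by
  simp only [rademacher, pow_zero, one_mul, mul_add, mul_one, Real.sin_add_pi, Real.sign_neg]

lemma rademacher_succ_periodic (k : ℕ) : Function.Periodic (rademacher (k + 1)) 1 := fun t => by
  have h : (2 : ℝ) ^ (k + 1) * π * (t + 1) = 2 ^ (k + 1) * π * t + (2 ^ k : ℕ) * (2 * π) := by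
    push_cast
    ring
  simp only [rademacher, h, Real.sin_add_nat_mul_two_pi]

lemma rademacher_mul_self_ae (n : ℕ) : ∀ᵐ t, rademacher n t * rademacher n t = 1 := by
  have h_zeros : {t : ℝ | Real.sin (2 ^ n * π * t) = 0}.Countable := by
    refine Set.Countable.mono (fun t ht => ?_) (countable_range fun k : ℤ => (k : ℝ) / 2 ^ n)
    obtain ⟨k, hk⟩ := Real.sin_eq_zero_iff.1 ht
    refine ⟨k, ?_⟩
    field_simp
    nlinarith [Real.pi_pos]
  filter_upwards [h_zeros.ae_notMem volume] with t ht
  rcases Real.sign_apply_eq_of_ne_zero _ ht with h | h <;> simp [rademacher, h]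

lemma integral_rademacher_mul_self (n : ℕ) :
    ∫ t in Icc (0 : ℝ) 1, rademacher n t * rademacher n t = 1 := by
  rw [integral_congr_ae (ae_restrict_of_ae (rademacher_mul_self_ae n))]
  simp

lemma integral_rademacher_mul_rademacher {m n : ℕ} (hm : 1 ≤ m) (hmn : m < n) :
    ∫ t in Icc (0 : ℝ) 1, rademacher m t * rademacher n t = 0 := by
  obtain ⟨m, rfl⟩ := Nat.exists_eq_add_of_le' hm
  obtain ⟨k, rfl⟩ := Nat.exists_eq_add_of_lt hmn
  set F : ℝ → ℝ := fun u => rademacher 0 u * rademacher (k + 1) u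
  have hF : Function.Antiperiodic F 1 := fun u => by
    simp only [F, rademacher_zero_antiperiodic u, rademacher_succ_periodic k u, neg_mul]
  have hF_int (a b : ℝ) : IntervalIntegrable F volume a b := by
    refine (intervalIntegrable_const (c := (1 : ℝ))).mono_fun' (by fun_prop)
      (ae_of_all _ fun u => ?_)
    simpa [F, abs_mul] using
      mul_le_one₀ (abs_rademacher_le_one 0 u) (abs_nonneg _) (abs_rademacher_le_one (k + 1) u)
  have h_comp (t : ℝ) :
      rademacher (m + 1) t * rademacher (m + 1 + k + 1) t = F (2 ^ (m + 1) * t) := by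
    simp only [F, ← rademacher_add, add_zero, add_assoc]
  have h_len : (2 : ℝ) ^ (m + 1) * 1 = 0 + (2 ^ m : ℤ) • (2 * 1) := by ring
  rw [integral_Icc_eq_integral_Ioc, ← intervalIntegral.integral_of_le zero_le_one]
  simp only [h_comp]
  rw [intervalIntegral.integral_comp_mul_left F (by positivity), mul_zero, h_len,
    hF.intervalIntegral_add_zsmul_eq_zero hF_int, smul_zero]

lemma one_le_integral_abs_sub_rademacher {m n : ℕ} (hm : 1 ≤ m) (hmn : m < n) :
    1 ≤ ∫ t in Icc (0 : ℝ) 1, |rademacher n t - rademacher m t| := by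
  have h_int {f : ℝ → ℝ} (hf : Measurable f) {C : ℝ} (hC : ∀ t, |f t| ≤ C) :
      Integrable f (volume.restrict (Icc (0 : ℝ) 1)) :=
    .of_bound hf.aestronglyMeasurable C (ae_of_all _ hC)
  have h_bound (a b : ℕ) (t : ℝ) : |rademacher a t * rademacher b t| ≤ 1 := by
    rw [abs_mul]
    exact mul_le_one₀ (abs_rademacher_le_one a t) (abs_nonneg _) (abs_rademacher_le_one b t)
  have h_nn := h_int (by fun_prop) (h_bound n n)
  have h_mn := h_int (by fun_prop) (h_bound m n)
  calc 1 = ∫ t in Icc (0 : ℝ) 1,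
        (rademacher n t * rademacher n t - rademacher m t * rademacher n t) := by
        rw [integral_sub h_nn h_mn, integral_rademacher_mul_self,
          integral_rademacher_mul_rademacher hm hmn, sub_zero]
    _ ≤ ∫ t in Icc (0 : ℝ) 1, |rademacher n t - rademacher m t| := by
      refine integral_mono (h_nn.sub h_mn) (h_int (by fun_prop) (C := 2) fun t => ?_) fun t => ?_
      · rw [abs_abs]
        linarith [abs_sub (rademacher n t) (rademacher m t), abs_rademacher_le_one n t,
          abs_rademacher_le_one m t]
      calc _ = (rademacher n t - rademacher m t) * rademacher n t := by ring
        _ ≤ |rademacher n t - rademacher m t| * |rademacher n t| := by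
          rw [← abs_mul]; exact le_abs_self _
        _ ≤ _ := mul_le_of_le_one_right (abs_nonneg _) (abs_rademacher_le_one n t)

open Real in
/-- **Example.** The Rademacher sequence `r_n(t) = sgn (sin (2^n π t))` in
`L∞[0,1]` has no order convergent subnet; hence the identity on
`(L∞[0,1], |·|, L∞[0,1])` is neither `p`-compact nor sequentially `p`-compact. -/
theorem rademacher_no_order_convergent_subnet
    (μ : Measure ℝ) (hμ : μ = MeasureTheory.volume.restrict (Set.Icc (0:ℝ) 1))
    (r : ℕ → MeasureTheory.Lp ℝ ⊤ μ)
    (hr : ∀ n : ℕ, ∀ᵐ t ∂μ,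
      (r n : ℝ → ℝ) t = Real.sign (Real.sin ((2:ℝ)^n * π * t))) :
    ∀ (B : Type) (_ : Preorder B), IsDirectedIx B →
      ∀ φ : B → ℕ, IsSubnet φ →
        ¬ ∃ l : MeasureTheory.Lp ℝ ⊤ μ, OConvNet (fun β => r (φ β)) l := by
  subst hμ
  rintro B _ ⟨-, hB⟩ φ hφ ⟨l, Γ, _, ⟨hΓ, hΓ_dir⟩, g, hg, hg_glb, h_conv⟩
  have : IsDirectedOrder B := ⟨hB⟩
  have : IsDirectedOrder Γ := ⟨hΓ_dir⟩
  obtain ⟨γ, hγ⟩ : ∃ γ, ∫ t, g γ t ∂(volume.restrict (Icc (0 : ℝ) 1)) < 1 / 2 :=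
    exists_lt_of_ciInf_lt (by rw [Lp.iInf_integral_eq_zero_of_isGLB hg hg_glb]; norm_num)
  obtain ⟨β₀, hβ₀⟩ := h_conv γ
  obtain ⟨β, hβ, hm⟩ := hφ.exists_ge_le_apply β₀ 1
  obtain ⟨β', hβ', hmn⟩ := hφ.exists_ge_le_apply β₀ (φ β + 1)
  have h_upper :
      ∫ t in Icc (0 : ℝ) 1, |r (φ β') t - r (φ β) t| ≤ 2 * ∫ t in Icc (0 : ℝ) 1, g γ t :=
    Lp.integral_abs_sub_le_two_mul (hβ₀ β' hβ') (hβ₀ β hβ)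
  have h_lower : 1 ≤ ∫ t in Icc (0 : ℝ) 1, |r (φ β') t - r (φ β) t| := by
    refine (one_le_integral_abs_sub_rademacher hm hmn).trans_eq (integral_congr_ae ?_)
    filter_upwards [hr (φ β), hr (φ β')] with t h h'
    rw [h, h', rademacher, rademacher]
  linarith
end

section
/- If a subnet (r_{n_α}) of an orthonormal sequence (r_n) of unimodular functions in L∞[0,1] (|r_n| = 1 a.e., ∫ r_m r_n = 0 for m ≠ n) order converges to r in L∞[0,1], then ∫₀¹ r² dμ = 0, which is impossible; hence no such subnet exists. -/
/-!
For `m ≠ n`, unimodularity and orthogonality give `∫ (r_m - r_n)² = 2`, while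
`(r_m - r_n)² ≤ 2 |r_m - r_n| ≤ 4 g` as soon as `r_m` and `r_n` both lie within `g` of `ρ`.
A subnet of `(r_n)` visits infinitely many indices, so every element `g_γ` of a net witnessing
order convergence has `∫ g_γ ≥ 1/2`. This contradicts the order continuity of the integral
on `L∞` of a finite measure: the integrals of a decreasing directed family with infimum `0`
tend to `0`, because by monotone convergence the infimum of the family along a minimizing
sequence is a lower bound of the whole family with the least possible integral.
-/

open Filter MeasureTheory Set

open Topology

theorem IsSubnet.exists_ge_ne {B : Type} [Preorder B] (hB : IsDirectedIx B) {φ : B → ℕ}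
    (hφ : IsSubnet φ) (β₀ : B) : ∃ β ≥ β₀, φ β ≠ φ β₀ := by
  obtain ⟨β₁, hβ₁⟩ := hφ.2 (φ β₀ + 1)
  obtain ⟨β, hβ₀β, hβ₁β⟩ := hB.2 β₀ β₁
  exact ⟨β, hβ₀β, (Nat.lt_of_succ_le (hβ₁.trans (hφ.1 hβ₁β))).ne'⟩

theorem IsDirectedIx.exists_monotone_tendsto_iInf {Γ : Type} [Preorder Γ] (hΓ : IsDirectedIx Γ)
    {I : Γ → ℝ} (hI : Antitone I) (hbdd : BddBelow (range I)) (u : ℕ → Γ) :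
    ∃ s : ℕ → Γ, Monotone s ∧ (∀ k, u k ≤ s k) ∧
      Tendsto (fun k => I (s k)) atTop (𝓝 (⨅ γ, I γ)) := by
  obtain ⟨_, hup⟩ := hΓ
  choose ub hub_left hub_right using hup
  have hclose : ∀ k : ℕ, ∃ γ, I γ < (⨅ γ, I γ) + 1 / ((k : ℝ) + 1) := fun k =>
    exists_lt_of_ciInf_lt (lt_add_of_pos_right _ Nat.one_div_pos_of_nat)
  choose v hv using hclose
  let w : ℕ → Γ := fun k => ub (u k) (v k)
  let s : ℕ → Γ := fun k => Nat.rec (w 0) (fun k sk => ub sk (w (k + 1))) k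
  have hws : ∀ k, w k ≤ s k
    | 0 => le_rfl
    | _ + 1 => hub_right _ _
  refine ⟨s, monotone_nat_of_le_succ fun k => hub_left _ _,
    fun k => (hub_left _ _).trans (hws k), ?_⟩
  have hupper : Tendsto (fun k : ℕ => (⨅ γ, I γ) + 1 / ((k : ℝ) + 1)) atTop (𝓝 (⨅ γ, I γ)) := by
    simpa using tendsto_const_nhds.add (tendsto_one_div_add_atTop_nhds_zero_nat (𝕜 := ℝ))
  refine tendsto_of_tendsto_of_tendsto_of_le_of_le tendsto_const_nhds hupper
    (fun k => ciInf_le hbdd _) fun k => ?_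
  exact (hI ((hub_right _ _).trans (hws k))).trans (hv k).le

theorem two_sub_two_mul_le_four_mul {a b c g : ℝ} (ha : |a| = 1) (hb : |b| = 1)
    (hac : |a - c| ≤ g) (hbc : |b - c| ≤ g) : 2 - 2 * (a * b) ≤ 4 * g := by
  have hdist : |a - b| ≤ 2 * g := by
    calc |a - b| ≤ |a - c| + |c - b| := abs_sub_le a c b
      _ ≤ 2 * g := by rw [abs_sub_comm c b]; linarith
  have hdiam : |a - b| ≤ 2 := (abs_sub a b).trans (by rw [ha, hb]; norm_num)
  have hsq : 2 - 2 * (a * b) = |a - b| * |a - b| := by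
    rw [abs_mul_abs_self]
    nlinarith [abs_mul_abs_self a, abs_mul_abs_self b]
  rw [hsq]
  nlinarith [abs_nonneg (a - b)]

namespace MeasureTheory.Lp

variable {α : Type*} [MeasurableSpace α] {μ : Measure α}

theorem ae_abs_sub_le {p : ENNReal} {f h G : Lp ℝ p μ} (hle : |f - h| ≤ G) :
    ∀ᵐ t ∂μ, |f t - h t| ≤ G t := by
  filter_upwards [(Lp.coeFn_le _ _).2 hle, Lp.coeFn_abs (f - h), Lp.coeFn_sub f h]
    with t hle habs hsub
  rwa [habs, hsub] at hle

theorem integral_coeFn_zero {p : ENNReal} : ∫ t, (0 : Lp ℝ p μ) t ∂μ = 0 := by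
  rw [integral_congr_ae (Lp.coeFn_zero ℝ p μ)]
  simp

variable [IsFiniteMeasure μ]

theorem integrable_of_top (f : Lp ℝ ⊤ μ) : Integrable f μ :=
  (Lp.memLp f).integrable le_top

theorem integral_mono_of_le {f g : Lp ℝ ⊤ μ} (h : f ≤ g) : ∫ t, f t ∂μ ≤ ∫ t, g t ∂μ :=
  integral_mono_ae (integrable_of_top f) (integrable_of_top g) ((Lp.coeFn_le f g).2 h)

theorem integral_nonneg_of_nonneg {f : Lp ℝ ⊤ μ} (h : 0 ≤ f) : 0 ≤ ∫ t, f t ∂μ :=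
  integral_coeFn_zero (μ := μ) (p := ⊤) ▸ integral_mono_of_le h

theorem integral_nonpos_of_nonpos {f : Lp ℝ ⊤ μ} (h : f ≤ 0) : ∫ t, f t ∂μ ≤ 0 :=
  integral_coeFn_zero (μ := μ) (p := ⊤) ▸ integral_mono_of_le h

theorem eq_of_le_of_integral_le {f g : Lp ℝ ⊤ μ} (h : f ≤ g)
    (hint : ∫ t, g t ∂μ ≤ ∫ t, f t ∂μ) : f = g :=
  Lp.ext <| (integral_eq_iff_of_ae_le (integrable_of_top f) (integrable_of_top g)
    ((Lp.coeFn_le f g).2 h)).1 (le_antisymm (integral_mono_of_le h) hint)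

theorem exists_isGLB_tendsto_integral_of_antitone {f : ℕ → Lp ℝ ⊤ μ} (hf : Antitone f)
    (hf_nonneg : ∀ k, 0 ≤ f k) :
    ∃ w : Lp ℝ ⊤ μ, IsGLB (range f) w ∧
      Tendsto (fun k => ∫ t, f k t ∂μ) atTop (𝓝 (∫ t, w t ∂μ)) := by
  have h_anti : ∀ᵐ t ∂μ, Antitone fun k => f k t := by
    filter_upwards [ae_all_iff.2 fun k => (Lp.coeFn_le _ _).2 (hf (Nat.le_succ k))] with t ht
    exact antitone_nat_of_succ_le ht
  have h_nonneg : ∀ᵐ t ∂μ, ∀ k, 0 ≤ f k t := ae_all_iff.2 fun k => by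
    filter_upwards [(Lp.coeFn_le _ _).2 (hf_nonneg k), Lp.coeFn_zero ℝ ⊤ μ] with t ht h0
    rwa [h0] at ht
  let F : α → ℝ := fun t => ⨅ k, f k t
  have h_tendsto : ∀ᵐ t ∂μ, Tendsto (fun k => f k t) atTop (𝓝 (F t)) := by
    filter_upwards [h_anti, h_nonneg] with t ht h0
    exact tendsto_atTop_ciInf ht ⟨0, forall_mem_range.2 h0⟩
  have hF_le : ∀ k, F ≤ᵐ[μ] f k := fun k => by
    filter_upwards [h_nonneg] with t h0
    exact ciInf_le ⟨0, forall_mem_range.2 h0⟩ k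
  have hF_bound : ∀ᵐ t ∂μ, ‖F t‖ ≤ ‖f 0 t‖ := by
    filter_upwards [hF_le 0, h_nonneg] with t hle h0
    exact abs_le_abs_of_nonneg (le_ciInf h0) hle
  have hF : MemLp F ⊤ μ := (Lp.memLp (f 0)).of_le
    (aestronglyMeasurable_of_tendsto_ae atTop (fun k => Lp.aestronglyMeasurable (f k)) h_tendsto)
    hF_bound
  refine ⟨hF.toLp F, ⟨?_, fun v hv => ?_⟩, ?_⟩
  · rintro _ ⟨k, rfl⟩
    exact (Lp.coeFn_le _ _).1 (hF.coeFn_toLp.trans_le (hF_le k))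
  · have hv_le : ∀ᵐ t ∂μ, ∀ k, v t ≤ f k t :=
      ae_all_iff.2 fun k => (Lp.coeFn_le _ _).2 (hv ⟨k, rfl⟩)
    refine (Lp.coeFn_le _ _).1 ?_
    filter_upwards [hv_le, hF.coeFn_toLp] with t hle hF_eq
    rw [hF_eq]
    exact le_ciInf hle
  · rw [integral_congr_ae hF.coeFn_toLp]
    exact integral_tendsto_of_tendsto_of_antitone (fun k => integrable_of_top (f k))
      (hF.integrable le_top) h_anti h_tendsto

theorem exists_integral_lt_of_isGLB_range_eq_zero {Γ : Type} [Preorder Γ] (hΓ : IsDirectedIx Γ)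
    {g : Γ → Lp ℝ ⊤ μ} (hg : Antitone g) (hglb : IsGLB (range g) 0) {ε : ℝ} (hε : 0 < ε) :
    ∃ γ, ∫ t, g γ t ∂μ < ε := by
  have : Nonempty Γ := hΓ.1
  choose ub hub_left hub_right using hΓ.2
  have hg_nonneg : ∀ γ, 0 ≤ g γ := fun γ => hglb.1 ⟨γ, rfl⟩
  let I : Γ → ℝ := fun γ => ∫ t, g γ t ∂μ
  have hI : Antitone I := fun _ _ h => integral_mono_of_le (hg h)
  have hI_bdd : BddBelow (range I) :=
    ⟨0, forall_mem_range.2 fun γ => integral_nonneg_of_nonneg (hg_nonneg γ)⟩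
  have hlimit : ∀ u : ℕ → Γ, ∃ s : ℕ → Γ, (∀ k, u k ≤ s k) ∧ ∃ w, IsGLB (range (g ∘ s)) w ∧
      ∫ t, w t ∂μ = ⨅ γ, I γ := fun u => by
    obtain ⟨s, hs, hus, hs_tendsto⟩ := hΓ.exists_monotone_tendsto_iInf hI hI_bdd u
    obtain ⟨w, hw, hw_tendsto⟩ :=
      exists_isGLB_tendsto_integral_of_antitone (hg.comp_monotone hs) fun k => hg_nonneg (s k)
    exact ⟨s, hus, w, hw, tendsto_nhds_unique hw_tendsto hs_tendsto⟩
  obtain ⟨s, -, w, hw, hw_int⟩ := hlimit fun _ => Classical.arbitrary Γ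
  -- A minimizing sequence running above both `s` and `γ` has an infimum `w' ≤ w` with the same
  -- integral, so `w' = w`, and `w'` lies below `g γ`.
  have hw_lb : w ∈ lowerBounds (range g) := by
    rintro _ ⟨γ, rfl⟩
    obtain ⟨s', hs', w', hw', hw'_int⟩ := hlimit fun k => ub (s k) γ
    have hw'w : w' ≤ w := hw.2 <| forall_mem_range.2 fun k =>
      (hw'.1 ⟨k, rfl⟩).trans (hg ((hub_left _ _).trans (hs' k)))
    calc w = w' := (eq_of_le_of_integral_le hw'w (by rw [hw_int, hw'_int])).symm
      _ ≤ g (s' 0) := hw'.1 ⟨0, rfl⟩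
      _ ≤ g γ := hg ((hub_right _ _).trans (hs' 0))
  have hI_le : ⨅ γ, I γ ≤ 0 := hw_int ▸ integral_nonpos_of_nonpos (hglb.2 hw_lb)
  exact exists_lt_of_ciInf_lt (hI_le.trans_lt hε)

theorem measureReal_univ_le_two_mul_integral {a b ρ G : Lp ℝ ⊤ μ}
    (ha : ∀ᵐ t ∂μ, |a t| = 1) (hb : ∀ᵐ t ∂μ, |b t| = 1) (hab : ∫ t, a t * b t ∂μ = 0)
    (haρ : |a - ρ| ≤ G) (hbρ : |b - ρ| ≤ G) : μ.real univ ≤ 2 * ∫ t, G t ∂μ := by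
  have hab_int : Integrable (fun t => a t * b t) μ :=
    (integrable_of_top b).bdd_mul (Lp.aestronglyMeasurable a) (by
      filter_upwards [ha] with t ht
      rw [Real.norm_eq_abs, ht])
  have hpointwise : ∀ᵐ t ∂μ, 2 - 2 * (a t * b t) ≤ 4 * G t := by
    filter_upwards [ha, hb, ae_abs_sub_le haρ, ae_abs_sub_le hbρ] with t hat hbt haρt hbρt
    exact two_sub_two_mul_le_four_mul hat hbt haρt hbρt
  have hint : ∫ t, (2 - 2 * (a t * b t)) ∂μ ≤ ∫ t, 4 * G t ∂μ :=
    integral_mono_ae ((integrable_const 2).sub (hab_int.const_mul 2))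
      ((integrable_of_top G).const_mul 4) hpointwise
  rw [integral_sub (integrable_const 2) (hab_int.const_mul 2), integral_const_mul,
    integral_const_mul, hab, integral_const, smul_eq_mul] at hint
  linarith

end MeasureTheory.Lp

/-- **Lemma.** Let `(r_n)` be an orthonormal sequence of unimodular functions in
`L∞[0,1]` (`|r_n| = 1` a.e., `∫ r_m r_n = 0` for `m ≠ n`). If a subnet
`(r_{φ(β)})` order converges to `ρ` in `L∞[0,1]`, then `∫ ρ² dμ = 0`; this is
impossible, so no subnet of `(r_n)` order converges. -/
theorem orthonormal_unimodular_no_order_convergent_subnet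
    (μ : Measure ℝ) (hμ : μ = MeasureTheory.volume.restrict (Set.Icc (0:ℝ) 1))
    (r : ℕ → MeasureTheory.Lp ℝ ⊤ μ)
    (huni : ∀ n : ℕ, ∀ᵐ t ∂μ, |(r n : ℝ → ℝ) t| = 1)
    (horth : ∀ m n : ℕ, m ≠ n →
      (∫ t, (r m : ℝ → ℝ) t * (r n : ℝ → ℝ) t ∂μ) = 0) :
    (∀ (B : Type) (_ : Preorder B), IsDirectedIx B →
      ∀ φ : B → ℕ, IsSubnet φ →
        ∀ ρ : MeasureTheory.Lp ℝ ⊤ μ, OConvNet (fun β => r (φ β)) ρ →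
          (∫ t, (ρ : ℝ → ℝ) t * (ρ : ℝ → ℝ) t ∂μ) = 0) ∧
    ¬ ∃ (B : Type) (_ : Preorder B), IsDirectedIx B ∧
        ∃ φ : B → ℕ, IsSubnet φ ∧
          ∃ ρ : MeasureTheory.Lp ℝ ⊤ μ, OConvNet (fun β => r (φ β)) ρ := by
  have : IsProbabilityMeasure μ := ⟨by simp [hμ]⟩
  have no_conv : ¬ ∃ (B : Type) (_ : Preorder B), IsDirectedIx B ∧
      ∃ φ : B → ℕ, IsSubnet φ ∧ ∃ ρ : Lp ℝ ⊤ μ, OConvNet (fun β => r (φ β)) ρ := by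
    rintro ⟨B, _, hB, φ, hφ, ρ, Γ, _, hΓ, g, hg, hglb, hdom⟩
    obtain ⟨γ, hγ⟩ :=
      Lp.exists_integral_lt_of_isGLB_range_eq_zero hΓ hg hglb (one_half_pos (α := ℝ))
    obtain ⟨β₀, hβ₀⟩ := hdom γ
    obtain ⟨β, hβ, hne⟩ := hφ.exists_ge_ne hB β₀
    have := Lp.measureReal_univ_le_two_mul_integral (huni _) (huni _) (horth _ _ hne)
      (hβ₀ β hβ) (hβ₀ β₀ le_rfl)
    rw [probReal_univ] at this
    linarith
  exact ⟨fun B _ hB φ hφ ρ hρ => absurd ⟨B, _, hB, φ, hφ, ρ, hρ⟩ no_conv, no_conv⟩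
end

section
/- The operator T : L¹[0,2π] → c₀, (T f)_n = ∫₀^{2π} f(t) sin(nt) dt, is not sequentially order compact: the sequence u_n(t) = sin(nt) is order bounded in L¹[0,2π] but (T u_n) = (π e_n) has no order convergent subsequence in c₀. -/
/-!
Orthogonality of the sines on `[0, 2π]` gives `T u_n = π e_{n+1}`. An order convergent sequence
in `c₀` is eventually squeezed between `l - g` and `l + g` for some `l, g ∈ c₀`, so its entries
along any diagonal `k ↦ n k → ∞` tend to `0`; along `n k = ψ k + 1` they all equal `π`.
-/

open Filter MeasureTheory Set

open Real in
theorem integral_cos_int_mul_zero_two_pi {k : ℤ} (hk : k ≠ 0) :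
    ∫ t in (0 : ℝ)..2 * π, cos (k * t) = 0 := by
  rw [intervalIntegral.integral_comp_mul_left cos (Int.cast_ne_zero.mpr hk), integral_cos,
    show (k : ℝ) * (2 * π) = ((2 * k : ℤ) : ℝ) * π by push_cast; ring, sin_int_mul_pi]
  simp

open Real in
theorem integral_sin_nat_mul_mul_sin_nat_mul {a b : ℕ} (ha : a ≠ 0) :
    ∫ t in (0 : ℝ)..2 * π, sin (a * t) * sin (b * t) = if b = a then π else 0 := by
  have product_to_sum : ∀ t : ℝ, sin (a * t) * sin (b * t)
      = (cos (((a - b : ℤ) : ℝ) * t) - cos (((a + b : ℤ) : ℝ) * t)) / 2 := by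
    intro t
    rw [cos_sub_cos]
    push_cast
    rw [show ((a - b) * t + (a + b) * t) / 2 = (a : ℝ) * t by ring,
      show ((a - b) * t - (a + b) * t) / 2 = -((b : ℝ) * t) by ring, sin_neg]
    ring
  have hcos : ∀ k : ℤ, IntervalIntegrable (fun t => cos (k * t)) volume 0 (2 * π) :=
    fun k => (continuous_cos.comp (continuous_const.mul continuous_id)).intervalIntegrable _ _
  simp_rw [product_to_sum]
  rw [intervalIntegral.integral_div, intervalIntegral.integral_sub (hcos _) (hcos _),
    integral_cos_int_mul_zero_two_pi (k := a + b) (by omega)]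
  split_ifs with hb
  · subst hb
    simp [two_mul]
  · rw [integral_cos_int_mul_zero_two_pi (by omega)]
    simp

open Real in
theorem setIntegral_Icc_sin_nat_mul_mul_sin_nat_mul {a b : ℕ} (ha : a ≠ 0) :
    ∫ t in Icc (0 : ℝ) (2 * π), sin (a * t) * sin (b * t) = if b = a then π else 0 := by
  rw [integral_Icc_eq_integral_Ioc, ← intervalIntegral.integral_of_le (by positivity)]
  exact integral_sin_nat_mul_mul_sin_nat_mul ha

theorem OConvNetIn.exists_abs_sub_le {A G : Type} [Preorder A] [Lattice G] [AddCommGroup G]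
    {S : Set G} {f : A → G} {l : G} (h : OConvNetIn S f l) :
    ∃ g ∈ S, ∃ α₀, ∀ α ≥ α₀, |f α - l| ≤ g := by
  obtain ⟨-, Γ, _, ⟨⟨γ⟩, -⟩, g, hgS, -, -, -, hconv⟩ := h
  exact ⟨g γ, hgS γ, hconv γ⟩

theorem tendsto_diagonal_of_abs_sub_le {f : ℕ → ℕ → ℝ} {l g : ℕ → ℝ}
    (hl : Tendsto l atTop (nhds 0)) (hg : Tendsto g atTop (nhds 0))
    (hfg : ∃ k₀, ∀ k ≥ k₀, |f k - l| ≤ g) {n : ℕ → ℕ} (hn : Tendsto n atTop atTop) :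
    Tendsto (fun k => f k (n k)) atTop (nhds 0) := by
  obtain ⟨k₀, hk₀⟩ := hfg
  have hbound : Tendsto (fun k => g (n k) + |l (n k)|) atTop (nhds 0) := by
    simpa [Function.comp_def] using (hg.add hl.abs).comp hn
  refine squeeze_zero_norm' (eventually_atTop.mpr ⟨k₀, fun k hk => ?_⟩) hbound
  have h := hk₀ k hk (n k)
  simp only [Pi.abs_apply, Pi.sub_apply] at h
  rw [Real.norm_eq_abs]
  linarith [abs_sub_abs_le_abs_sub (f k (n k)) (l (n k))]

open Real in
/-- **Remark.** The operator `T : L¹[0,2π] → c₀`,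
`(T f)_n = ∫₀^{2π} f(t) sin(nt) dt`, is not sequentially order compact: the
sequence `u_n(t) = sin((n+1)t)` is order bounded in `L¹[0,2π]`, its image is
`(π e_{n+1})`, and no subsequence of the image order converges in `c₀`. -/
theorem sine_operator_not_sequentially_order_compact
    (μ : Measure ℝ) (hμ : μ = MeasureTheory.volume.restrict (Set.Icc (0:ℝ) (2*π))) :
    (∀ (n : ℕ) (t : ℝ), |Real.sin ((n + 1 : ℕ) * t)| ≤ 1) ∧
    (∀ n : ℕ,
      (fun m : ℕ => ∫ t, Real.sin ((n + 1 : ℕ) * t) * Real.sin (m * t) ∂μ) =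
        fun m : ℕ => if m = n + 1 then π else 0) ∧
    ∀ ψ : ℕ → ℕ, StrictMono ψ →
      ¬ ∃ l : ℕ → ℝ,
        OConvSeqIn {b : ℕ → ℝ | Filter.Tendsto b Filter.atTop (nhds 0)}
          (fun k => fun m : ℕ =>
            ∫ t, Real.sin ((ψ k + 1 : ℕ) * t) * Real.sin (m * t) ∂μ) l := by
  subst hμ
  have hT (n m : ℕ) : ∫ t in Icc (0 : ℝ) (2 * π), sin ((n + 1 : ℕ) * t) * sin (m * t) =
      if m = n + 1 then π else 0 :=
    setIntegral_Icc_sin_nat_mul_mul_sin_nat_mul n.succ_ne_zero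
  refine ⟨fun n t => abs_sin_le_one _, fun n => funext (hT n), ?_⟩
  rintro ψ hψ ⟨l, hconv⟩
  obtain ⟨g, hg, hfg⟩ := hconv.exists_abs_sub_le
  have hψ_succ : Tendsto (fun k => ψ k + 1) atTop atTop :=
    (tendsto_add_atTop_nat 1).comp hψ.tendsto_atTop
  have hπ := tendsto_diagonal_of_abs_sub_le hconv.1 hg hfg hψ_succ
  simp only [hT, if_true] at hπ
  exact pi_ne_zero (tendsto_nhds_unique tendsto_const_nhds hπ)
end
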